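/- If V ∈ L¹(ℝ³) ∩ L²(ℝ³), then V is a Rollnik potential and its Rollnik norm satisfies ‖V‖_R ≤ c₁ ‖V‖_{L¹}^{1/3} ‖V‖_{L²}^{2/3}, where c₁ = √3 · (2π)^{1/3}; that is, ( ∫∫_{ℝ³×ℝ³} |V(x)||V(y)| / |x-y|² dx dy )^{1/2} ≤ √3 (2π)^{1/3} ‖V‖_{L¹}^{1/3} ‖V‖_{L²}^{2/3}. -/

import Mathlib

open MeasureTheory Complex Filter Topology Set Metric
open scoped ENNReal

noncomputable section

/-- The (real-valued) `L^p` norm. -/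
def LpR {d : ℕ} (p : ℝ≥0∞) {E : Type} [NormedAddCommGroup E] (f : (Fin d → ℝ) → E) : ℝ :=
  (eLpNorm f p volume).toReal

/-- Squared Euclidean distance on `ℝ³`. -/
def sqDist (x y : Fin 3 → ℝ) : ℝ := ∑ i, (x i - y i) ^ 2

def sq3 (z : Fin 3 → ℝ) : ℝ := ∑ i, z i ^ 2

lemma sqDist_eq (x y : Fin 3 → ℝ) : sqDist x y = sq3 (x - y) := by simp [sqDist, sq3]

lemma sq3_neg (z : Fin 3 → ℝ) : sq3 (-z) = sq3 z := by simp [sq3]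

def kN (R : ℝ) (z : Fin 3 → ℝ) : ℝ≥0∞ :=
  ENNReal.ofReal (if sq3 z ≤ R ^ 2 then (sq3 z)⁻¹ else 0)

lemma kN_neg (R : ℝ) (z : Fin 3 → ℝ) : kN R (-z) = kN R z := by
  unfold kN; rw [sq3_neg]

lemma sq3_measurable : Measurable sq3 := by
  unfold sq3
  exact Finset.measurable_sum _ fun i _ => ((measurable_pi_apply i).pow_const 2)
lemma kN_measurable (R : ℝ) : Measurable (kN R) := by
  apply ENNReal.measurable_ofReal.comp
  exact Measurable.ite (sq3_measurable measurableSet_Iic) sq3_measurable.inv measurable_const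

lemma gammaval : Real.Gamma ((Fintype.card (Fin 3) : ℝ) / 2 + 1) = 3 / 4 * Real.sqrt Real.pi := by
  have h3 : (Fintype.card (Fin 3) : ℝ) / 2 + 1 = (1 / 2 + 1) + 1 := by
    simp; norm_num
  rw [h3, Real.Gamma_add_one (by norm_num), Real.Gamma_add_one (by norm_num),
    Real.Gamma_one_half_eq]
  ring

lemma constval (r : ℝ) (hr : 0 ≤ r) :
    (ENNReal.ofReal r) ^ Fintype.card (Fin 3) *
      ENNReal.ofReal (Real.sqrt Real.pi ^ Fintype.card (Fin 3) /
        Real.Gamma ((Fintype.card (Fin 3) : ℝ) / 2 + 1))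
      = ENNReal.ofReal (4 / 3 * Real.pi * r ^ 3) := by
  rw [gammaval, Fintype.card_fin, ← ENNReal.ofReal_pow hr, ← ENNReal.ofReal_mul (by positivity)]
  congr 1
  have hs : Real.sqrt Real.pi ^ 3 = Real.pi * Real.sqrt Real.pi := by
    rw [pow_succ, Real.sq_sqrt Real.pi_nonneg]
  have h0 : Real.sqrt Real.pi ≠ 0 := ne_of_gt (Real.sqrt_pos.mpr Real.pi_pos)
  rw [hs]
  field_simp

lemma volume_ball_E (r : ℝ) (hr : 0 ≤ r) :
    volume (Metric.ball (0 : EuclideanSpace ℝ (Fin 3)) r)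
      = ENNReal.ofReal (4 / 3 * Real.pi * r ^ 3) := by
  rw [EuclideanSpace.volume_ball]; exact constval r hr

lemma volume_closedBall_E (r : ℝ) (hr : 0 ≤ r) :
    volume (Metric.closedBall (0 : EuclideanSpace ℝ (Fin 3)) r)
      = ENNReal.ofReal (4 / 3 * Real.pi * r ^ 3) := by
  rw [EuclideanSpace.volume_closedBall]; exact constval r hr

lemma kN_lintegral {R : ℝ} (hR : 0 < R) :
    ∫⁻ z, kN R z = ENNReal.ofReal (4 * Real.pi * R) := by
  have h1 : ∫⁻ z, kN R z
      = ∫⁻ x : EuclideanSpace ℝ (Fin 3), kN R (((MeasurableEquiv.toLp 2 (Fin 3 → ℝ)).symm) x) :=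
    ((EuclideanSpace.volume_preserving_symm_measurableEquiv_toLp (Fin 3)).lintegral_comp
      (kN_measurable R)).symm
  have h2 : ∀ x : EuclideanSpace ℝ (Fin 3), kN R (((MeasurableEquiv.toLp 2 (Fin 3 → ℝ)).symm) x)
      = ENNReal.ofReal (if ‖x‖ ≤ R then (‖x‖ ^ 2)⁻¹ else 0) := by
    intro x
    have hnorm : sq3 (((MeasurableEquiv.toLp 2 (Fin 3 → ℝ)).symm) x) = ‖x‖ ^ 2 := by
      rw [EuclideanSpace.norm_eq, Real.sq_sqrt (by positivity)]
      simp [sq3, Real.norm_eq_abs, sq_abs]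
    have hiff : sq3 (((MeasurableEquiv.toLp 2 (Fin 3 → ℝ)).symm) x) ≤ R ^ 2 ↔ ‖x‖ ≤ R := by
      rw [hnorm]
      constructor
      · intro h; nlinarith [norm_nonneg x]
      · intro h; nlinarith [norm_nonneg x]
    unfold kN
    by_cases h : ‖x‖ ≤ R
    · rw [if_pos (hiff.mpr h), if_pos h, hnorm]
    · rw [if_neg (fun hh => h (hiff.mp hh)), if_neg h]
  rw [h1]
  simp_rw [h2]
  -- layer cake
  have gmeas : Measurable fun x : EuclideanSpace ℝ (Fin 3) =>
      (if ‖x‖ ≤ R then (‖x‖ ^ 2)⁻¹ else 0) := by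
    exact Measurable.ite (measurable_norm measurableSet_Iic)
      ((measurable_norm.pow_const 2).inv) measurable_const
  rw [lintegral_eq_lintegral_meas_lt volume
    (ae_of_all _ fun x => by split_ifs <;> positivity) gmeas.aemeasurable]
  -- set description
  have hset : ∀ t : ℝ, 0 < t →
      {x : EuclideanSpace ℝ (Fin 3) | t < (if ‖x‖ ≤ R then (‖x‖ ^ 2)⁻¹ else 0)}
      = (Metric.closedBall (0 : EuclideanSpace ℝ (Fin 3)) R
          ∩ Metric.ball 0 (Real.sqrt t⁻¹)) \ {0} := by
    intro t ht
    ext x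
    simp only [mem_setOf_eq, mem_diff, mem_inter_iff, mem_closedBall, mem_ball,
      dist_zero_right, mem_singleton_iff]
    constructor
    · intro h
      split_ifs at h with hle
      · have hx0 : x ≠ 0 := by
          rintro rfl
          simp at h
          linarith
        have hxp : 0 < ‖x‖ := norm_pos_iff.mpr hx0
        have hn : 0 < ‖x‖ ^ 2 := by positivity
        refine ⟨⟨hle, ?_⟩, hx0⟩
        rw [Real.lt_sqrt (norm_nonneg x)]
        exact (lt_inv_comm₀ ht hn).mp h
      · linarith
    · rintro ⟨⟨hle, hlt⟩, hx0⟩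
      rw [if_pos hle]
      have hn : 0 < ‖x‖ ^ 2 := by
        have : 0 < ‖x‖ := norm_pos_iff.mpr hx0
        positivity
      rw [Real.lt_sqrt (norm_nonneg x)] at hlt
      exact (lt_inv_comm₀ hn ht).mp hlt
  -- volumes
  have hvol : ∀ t : ℝ, 0 < t →
      volume {x : EuclideanSpace ℝ (Fin 3) | t < (if ‖x‖ ≤ R then (‖x‖ ^ 2)⁻¹ else 0)}
      = volume (Metric.closedBall (0 : EuclideanSpace ℝ (Fin 3)) R
          ∩ Metric.ball 0 (Real.sqrt t⁻¹)) := by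
    intro t ht
    rw [hset t ht, measure_diff_null (measure_singleton _)]
  -- split
  have hsplit : Ioi (0 : ℝ) = Ioc (0 : ℝ) (R ^ 2)⁻¹ ∪ Ioi ((R ^ 2)⁻¹) :=
    (Ioc_union_Ioi_eq_Ioi (by positivity)).symm
  rw [hsplit, lintegral_union measurableSet_Ioi (Ioc_disjoint_Ioi le_rfl)]
  have hterm1 : ∫⁻ t in Ioc (0 : ℝ) (R ^ 2)⁻¹,
      volume {x : EuclideanSpace ℝ (Fin 3) | t < (if ‖x‖ ≤ R then (‖x‖ ^ 2)⁻¹ else 0)}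
      = ENNReal.ofReal (4 / 3 * Real.pi * R) := by
    rw [setLIntegral_congr_fun measurableSet_Ioc (fun t ht => ?_)
      (g := fun _ => ENNReal.ofReal (4 / 3 * Real.pi * R ^ 3))]
    · rw [setLIntegral_const, Real.volume_Ioc, ← ENNReal.ofReal_mul (by positivity)]
      congr 1
      field_simp
      ring
    · obtain ⟨ht0, hta⟩ := ht
      rw [hvol t ht0]
      have hRr : R ≤ Real.sqrt t⁻¹ := by
        rw [Real.le_sqrt hR.le (by positivity)]
        exact (le_inv_comm₀ ht0 (by positivity)).mp hta
      apply le_antisymm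
      · rw [← volume_closedBall_E R hR.le]
        exact measure_mono inter_subset_left
      · rw [← volume_ball_E R hR.le]
        exact measure_mono (subset_inter ball_subset_closedBall
          (ball_subset_ball hRr))
  have hterm2 : ∫⁻ t in Ioi ((R ^ 2)⁻¹),
      volume {x : EuclideanSpace ℝ (Fin 3) | t < (if ‖x‖ ≤ R then (‖x‖ ^ 2)⁻¹ else 0)}
      = ENNReal.ofReal (8 / 3 * Real.pi * R) := by
    rw [setLIntegral_congr_fun measurableSet_Ioi (fun t ht => ?_)
      (g := fun t => ENNReal.ofReal (4 / 3 * Real.pi) * ENNReal.ofReal (t ^ (-(3 : ℝ) / 2)))]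
    · rw [lintegral_const_mul' _ _ ENNReal.ofReal_ne_top,
        ← ofReal_integral_eq_lintegral_ofReal
          (integrableOn_Ioi_rpow_of_lt (by norm_num) (by positivity))
          ((ae_restrict_iff' measurableSet_Ioi).mpr (ae_of_all _ fun t ht =>
            Real.rpow_nonneg (le_of_lt (lt_trans (by positivity) (mem_Ioi.mp ht))) _)),
        integral_Ioi_rpow_of_lt (by norm_num) (by positivity),
        ← ENNReal.ofReal_mul (by positivity)]
      congr 1
      have h1 : ((R ^ 2)⁻¹ : ℝ) ^ (-(3 : ℝ) / 2 + 1) = R := by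
        rw [show (-(3 : ℝ) / 2 + 1) = -(1 / 2 : ℝ) by norm_num,
          Real.rpow_neg (by positivity), ← Real.sqrt_eq_rpow,
          Real.sqrt_inv, Real.sqrt_sq hR.le, inv_inv]
      rw [h1]
      field_simp
      ring
    · dsimp only
      have hta : (0 : ℝ) < (R ^ 2)⁻¹ := by positivity
      have ht0 : 0 < t := lt_trans hta (mem_Ioi.mp ht)
      rw [hvol t ht0]
      have hrR : Real.sqrt t⁻¹ ≤ R := by
        rw [show R = Real.sqrt (R ^ 2) by rw [Real.sqrt_sq hR.le]]
        apply Real.sqrt_le_sqrt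
        exact (inv_le_comm₀ (by positivity) ht0).mp (le_of_lt (mem_Ioi.mp ht))
      rw [inter_eq_self_of_subset_right
        ((ball_subset_ball hrR).trans ball_subset_closedBall)]
      rw [volume_ball_E _ (Real.sqrt_nonneg _), ← ENNReal.ofReal_mul (by positivity)]
      congr 1
      have hpow : Real.sqrt t⁻¹ ^ 3 = t ^ (-(3:ℝ) / 2) := by
        rw [Real.sqrt_eq_rpow, ← Real.rpow_natCast (t⁻¹ ^ ((1:ℝ)/2)) 3,
          ← Real.rpow_mul (by positivity), ← Real.rpow_neg_one t,
          ← Real.rpow_mul ht0.le]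
        norm_num
      rw [hpow]
  rw [hterm1, hterm2, ← ENNReal.ofReal_add (by positivity) (by positivity)]
  congr 1
  ring

lemma pointwise_bound {R : ℝ} (hR : 0 < R) (a b : ℝ) (x y : Fin 3 → ℝ) :
    ENNReal.ofReal (|a| * |b| / sqDist x y) ≤
      ENNReal.ofReal |a| * ENNReal.ofReal |b| * (kN R (x - y) + ENNReal.ofReal (R ^ 2)⁻¹) := by
  rw [sqDist_eq, div_eq_mul_inv, ENNReal.ofReal_mul (by positivity),
    ENNReal.ofReal_mul (abs_nonneg a)]
  refine mul_le_mul_right ?_ _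
  unfold kN
  split_ifs with h
  · exact le_add_right le_rfl
  · refine le_add_left (ENNReal.ofReal_le_ofReal ?_)
    exact inv_anti₀ (by positivity) (le_of_lt (not_le.mp h))

lemma main_bound (W : (Fin 3 → ℝ) → ℝ) (hW : Measurable W) {R : ℝ} (hR : 0 < R)
    (h1 : ∫⁻ x, ENNReal.ofReal |W x| ≠ ∞) :
    (∫⁻ x, ∫⁻ y, ENNReal.ofReal (|W x| * |W y| / sqDist x y)) ≤
      (∫⁻ x, ENNReal.ofReal |W x| ^ 2) * ENNReal.ofReal (4 * Real.pi * R) +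
        (∫⁻ x, ENNReal.ofReal |W x|) ^ 2 * ENNReal.ofReal (R ^ 2)⁻¹ := by
  set f : (Fin 3 → ℝ) → ℝ≥0∞ := fun x => ENNReal.ofReal |W x| with hf
  have fmeas : Measurable f := ENNReal.measurable_ofReal.comp hW.abs
  set c : ℝ≥0∞ := ENNReal.ofReal (R ^ 2)⁻¹ with hc
  set C : ℝ≥0∞ := ENNReal.ofReal (4 * Real.pi * R) with hC
  have hcne : c ≠ ∞ := ENNReal.ofReal_ne_top
  have hCne : C ≠ ∞ := ENNReal.ofReal_ne_top
  have hfne : ∀ x, f x ≠ ∞ := fun x => ENNReal.ofReal_ne_top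
  have hmeasA : Measurable fun p : (Fin 3 → ℝ) × (Fin 3 → ℝ) =>
      f p.2 ^ 2 * kN R (p.1 - p.2) := by
    exact ((fmeas.comp measurable_snd).pow_const 2).mul
      ((kN_measurable R).comp (measurable_fst.sub measurable_snd))
  -- step 1: pointwise + split
  have step1 : (∫⁻ x, ∫⁻ y, ENNReal.ofReal (|W x| * |W y| / sqDist x y)) ≤
      (∫⁻ x, ∫⁻ y, f x * f y * kN R (x - y)) + (∫⁻ x, ∫⁻ y, f x * f y * c) := by
    have hpt := fun x y => pointwise_bound hR (W x) (W y) x y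
    calc (∫⁻ x, ∫⁻ y, ENNReal.ofReal (|W x| * |W y| / sqDist x y))
        ≤ ∫⁻ x, ∫⁻ y, (f x * f y * kN R (x - y) + f x * f y * c) := by
          refine lintegral_mono fun x => lintegral_mono fun y => ?_
          rw [← mul_add]
          exact hpt x y
      _ = _ := by
          rw [← lintegral_add_left]
          · apply lintegral_congr fun x => ?_
            rw [lintegral_add_left]
            exact (measurable_const.mul fmeas).mul
              ((kN_measurable R).comp (measurable_const.sub measurable_id))
          · exact Measurable.lintegral_prod_right'
              (f := fun p : (Fin 3 → ℝ) × (Fin 3 → ℝ) => f p.1 * f p.2 * kN R (p.1 - p.2))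
              (((fmeas.comp measurable_fst).mul (fmeas.comp measurable_snd)).mul
                ((kN_measurable R).comp (measurable_fst.sub measurable_snd)))
  -- term B
  have termB : (∫⁻ x, ∫⁻ y, f x * f y * c) = (∫⁻ x, f x) ^ 2 * c := by
    have inner : ∀ x, (∫⁻ y, f x * f y * c) = f x * ((∫⁻ y, f y) * c) := by
      intro x
      simp_rw [mul_assoc]
      rw [lintegral_const_mul' _ _ (hfne x), lintegral_mul_const' _ _ hcne]
    simp_rw [inner]
    rw [lintegral_mul_const' _ _ (ENNReal.mul_ne_top h1 hcne), sq]
    ring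
  -- AM-GM
  have amgm : ∀ x y : (Fin 3 → ℝ), f x * f y ≤ 2⁻¹ * (f x ^ 2 + f y ^ 2) := by
    intro x y
    have h2 : (2 : ℝ≥0∞)⁻¹ = ENNReal.ofReal (2⁻¹ : ℝ) := by
      rw [ENNReal.ofReal_inv_of_pos two_pos]; norm_num
    rw [hf, ← ENNReal.ofReal_mul (abs_nonneg _), ← ENNReal.ofReal_pow (abs_nonneg _),
      ← ENNReal.ofReal_pow (abs_nonneg _), ← ENNReal.ofReal_add (by positivity) (by positivity),
      h2, ← ENNReal.ofReal_mul (by norm_num)]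
    exact ENNReal.ofReal_le_ofReal (by nlinarith [sq_nonneg (|W x| - |W y|)])
  -- kernel integrals
  have ker1 : ∀ x, (∫⁻ y, kN R (x - y)) = C := by
    intro x
    have he : ∀ y, kN R (x - y) = kN R (y - x) := by
      intro y; rw [← kN_neg R (y - x), neg_sub]
    simp_rw [he]
    rw [lintegral_sub_right_eq_self (kN R) x, kN_lintegral hR]
  have ker2 : ∀ y, (∫⁻ x, kN R (x - y)) = C := by
    intro y
    rw [lintegral_sub_right_eq_self (kN R) y, kN_lintegral hR]
  -- term A
  have hi2 : (2 : ℝ≥0∞)⁻¹ ≠ ∞ := by norm_num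
  have termA : (∫⁻ x, ∫⁻ y, f x * f y * kN R (x - y)) ≤ (∫⁻ x, f x ^ 2) * C := by
    have hb : (∫⁻ x, ∫⁻ y, f x * f y * kN R (x - y)) ≤
        ∫⁻ x, ∫⁻ y, 2⁻¹ * ((f x ^ 2) * kN R (x - y) + (f y ^ 2) * kN R (x - y)) := by
      refine lintegral_mono fun x => lintegral_mono fun y => ?_
      calc f x * f y * kN R (x - y) ≤ (2⁻¹ * (f x ^ 2 + f y ^ 2)) * kN R (x - y) :=
            mul_le_mul_left (amgm x y) _
        _ = 2⁻¹ * ((f x ^ 2) * kN R (x - y) + (f y ^ 2) * kN R (x - y)) := by ring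
    refine hb.trans (le_of_eq ?_)
    have eA : ∀ x, (∫⁻ y, 2⁻¹ * ((f x ^ 2) * kN R (x - y) + (f y ^ 2) * kN R (x - y)))
        = 2⁻¹ * (f x ^ 2 * C + ∫⁻ y, f y ^ 2 * kN R (x - y)) := by
      intro x
      rw [lintegral_const_mul' _ _ hi2, lintegral_add_left
        (show Measurable fun y => f x ^ 2 * kN R (x - y) from measurable_const.mul
          ((kN_measurable R).comp (measurable_const.sub measurable_id))),
        lintegral_const_mul' _ _ (ENNReal.pow_ne_top (hfne x)), ker1 x]
    simp_rw [eA]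
    have hswap : (∫⁻ x, ∫⁻ y, f y ^ 2 * kN R (x - y))
        = (∫⁻ x, f x ^ 2) * C := by
      rw [lintegral_lintegral_swap (hmeasA.aemeasurable)]
      have hin : ∀ y, (∫⁻ x, f y ^ 2 * kN R (x - y)) = f y ^ 2 * C := by
        intro y
        rw [lintegral_const_mul' _ _ (ENNReal.pow_ne_top (hfne y)), ker2 y]
      simp_rw [hin]
      exact lintegral_mul_const' _ _ hCne
    rw [lintegral_const_mul' _ _ hi2, lintegral_add_left (show Measurable fun x => f x ^ 2 * C from fmeas.pow_const 2 |>.mul measurable_const),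
      lintegral_mul_const' _ _ hCne, hswap, ← two_mul, ← mul_assoc,
      ENNReal.inv_mul_cancel two_ne_zero ENNReal.ofNat_ne_top, one_mul]
  calc (∫⁻ x, ∫⁻ y, ENNReal.ofReal (|W x| * |W y| / sqDist x y))
      ≤ (∫⁻ x, ∫⁻ y, f x * f y * kN R (x - y)) + (∫⁻ x, ∫⁻ y, f x * f y * c) := step1
    _ ≤ (∫⁻ x, f x ^ 2) * C + (∫⁻ x, f x) ^ 2 * c := by
        rw [termB]; exact add_le_add_left termA _

/-- if `V ∈ L¹(ℝ³) ∩ L²(ℝ³)` then `V` is a Rollnik potential and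
`‖V‖_R ≤ √3 (2π)^{1/3} ‖V‖_{L¹}^{1/3} ‖V‖_{L²}^{2/3}`. -/
theorem rollnik_norm_bound (V : (Fin 3 → ℝ) → ℝ)
    (hV1 : MemLp V 1 volume) (hV2 : MemLp V 2 volume) :
    (∫⁻ x, ∫⁻ y, ENNReal.ofReal (|V x| * |V y| / sqDist x y)) ^ ((1 : ℝ) / 2) ≤
      ENNReal.ofReal (Real.sqrt 3 * (2 * Real.pi) ^ ((1 : ℝ) / 3) *
        (LpR 1 V) ^ ((1 : ℝ) / 3) * (LpR 2 V) ^ ((2 : ℝ) / 3)) := by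
  by_cases hz : eLpNorm V 1 volume = 0
  · -- V = 0 a.e.
    have hV0 : V =ᵐ[volume] 0 := (eLpNorm_eq_zero_iff hV1.1 one_ne_zero).mp hz
    have hLHS : (∫⁻ x, ∫⁻ y, ENNReal.ofReal (|V x| * |V y| / sqDist x y)) = 0 := by
      have : ∀ x, (∫⁻ y, ENNReal.ofReal (|V x| * |V y| / sqDist x y)) = 0 := by
        intro x
        rw [show (0 : ℝ≥0∞) = ∫⁻ _ : Fin 3 → ℝ, 0 by simp]
        apply lintegral_congr_ae
        filter_upwards [hV0] with y hy
        simp [hy]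
      simp [this]
    rw [hLHS, ENNReal.zero_rpow_of_pos (by norm_num)]
    exact zero_le
  · -- positive case
    set W : (Fin 3 → ℝ) → ℝ := hV1.1.mk V with hWdef
    have hVW : V =ᵐ[volume] W := hV1.1.ae_eq_mk
    have hWmeas : Measurable W := hV1.1.stronglyMeasurable_mk.measurable
    -- LHS equality
    have hLHS : (∫⁻ x, ∫⁻ y, ENNReal.ofReal (|V x| * |V y| / sqDist x y))
        = ∫⁻ x, ∫⁻ y, ENNReal.ofReal (|W x| * |W y| / sqDist x y) := by
      calc (∫⁻ x, ∫⁻ y, ENNReal.ofReal (|V x| * |V y| / sqDist x y))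
          = ∫⁻ x, ∫⁻ y, ENNReal.ofReal (|V x| * |W y| / sqDist x y) := by
            refine lintegral_congr fun x => lintegral_congr_ae ?_
            filter_upwards [hVW] with y hy
            rw [hy]
        _ = _ := by
            apply lintegral_congr_ae
            filter_upwards [hVW] with x hx
            rw [hx]
    set L1 : ℝ := LpR 1 V with hL1def
    set L2 : ℝ := LpR 2 V with hL2def
    have heW1 : eLpNorm W 1 volume = eLpNorm V 1 volume := eLpNorm_congr_ae hVW.symm
    have heW2 : eLpNorm W 2 volume = eLpNorm V 2 volume := eLpNorm_congr_ae hVW.symm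
    have hz2 : eLpNorm V 2 volume ≠ 0 := by
      intro h
      exact hz (by
        have : V =ᵐ[volume] 0 := (eLpNorm_eq_zero_iff hV2.1 two_ne_zero).mp h
        rw [eLpNorm_congr_ae this, eLpNorm_zero])
    have hL1pos : 0 < L1 := ENNReal.toReal_pos hz hV1.2.ne
    have hL2pos : 0 < L2 := ENNReal.toReal_pos hz2 hV2.2.ne
    have hN1 : (∫⁻ x, ENNReal.ofReal |W x|) = ENNReal.ofReal L1 := by
      simp_rw [← Real.enorm_eq_ofReal_abs]
      rw [← eLpNorm_one_eq_lintegral_enorm, heW1, hL1def, LpR,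
        ENNReal.ofReal_toReal hV1.2.ne]
    have hN2 : (∫⁻ x, ENNReal.ofReal |W x| ^ 2) = ENNReal.ofReal (L2 ^ 2) := by
      simp_rw [← Real.enorm_eq_ofReal_abs]
      have h2 : eLpNorm W 2 volume
          = (∫⁻ x, (‖W x‖₊ : ℝ≥0∞) ^ (2 : ℝ)) ^ ((1 : ℝ) / 2) := by
        rw [eLpNorm_eq_lintegral_rpow_enorm_toReal two_ne_zero ENNReal.ofNat_ne_top]
        norm_num
        rfl
      have h3 : (∫⁻ x, (‖W x‖₊ : ℝ≥0∞) ^ (2 : ℝ)) = eLpNorm W 2 volume ^ (2 : ℝ) := by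
        rw [h2, ← ENNReal.rpow_mul]
        norm_num
      calc (∫⁻ x, ((‖W x‖₊ : ℝ≥0∞)) ^ 2)
          = ∫⁻ x, ((‖W x‖₊ : ℝ≥0∞)) ^ (2 : ℝ) := by
            apply lintegral_congr fun x => ?_
            rw [← ENNReal.rpow_natCast]
            norm_num
        _ = eLpNorm W 2 volume ^ (2 : ℝ) := h3
        _ = ENNReal.ofReal (L2 ^ 2) := by
            have hV2eq : eLpNorm V 2 volume = ENNReal.ofReal L2 :=
              (ENNReal.ofReal_toReal hV2.2.ne).symm
            rw [heW2, hV2eq, ENNReal.ofReal_rpow_of_nonneg hL2pos.le (by norm_num)]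
            congr 1
            rw [show ((2:ℝ)) = ((2:ℕ):ℝ) by norm_num, Real.rpow_natCast]
    -- choose radius
    set p : ℝ := (2 * Real.pi) ^ ((1 : ℝ) / 3) with hpdef
    set q : ℝ := L1 ^ ((1 : ℝ) / 3) with hqdef
    set s : ℝ := L2 ^ ((1 : ℝ) / 3) with hsdef
    have hppos : 0 < p := Real.rpow_pos_of_pos (by positivity) _
    have hqpos : 0 < q := Real.rpow_pos_of_pos hL1pos _
    have hspos : 0 < s := Real.rpow_pos_of_pos hL2pos _
    have hcube : ∀ x : ℝ, 0 ≤ x → (x ^ ((1 : ℝ) / 3)) ^ 3 = x := by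
      intro x hx
      rw [show (1 : ℝ) / 3 = ((3 : ℕ) : ℝ)⁻¹ by norm_num]
      exact Real.rpow_inv_natCast_pow hx (by norm_num)
    have hp3 : p ^ 3 = 2 * Real.pi := hcube _ (by positivity)
    have hq3 : q ^ 3 = L1 := hcube _ hL1pos.le
    have hs3 : s ^ 3 = L2 := hcube _ hL2pos.le
    have h23 : L2 ^ ((2 : ℝ) / 3) = s ^ 2 := by
      rw [hsdef, ← Real.rpow_natCast (L2 ^ ((1:ℝ)/3)) 2, ← Real.rpow_mul hL2pos.le]
      norm_num
    set R : ℝ := q ^ 2 / (p * s ^ 2) with hRdef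
    have hRpos : 0 < R := by positivity
    have h1fin : (∫⁻ x, ENNReal.ofReal |W x|) ≠ ∞ := by
      rw [hN1]; exact ENNReal.ofReal_ne_top
    have hmb := main_bound W hWmeas hRpos h1fin
    rw [hN1, hN2] at hmb
    -- combine ofReals
    set cg : ℝ := Real.sqrt 3 * (2 * Real.pi) ^ ((1 : ℝ) / 3) * L1 ^ ((1 : ℝ) / 3)
      * L2 ^ ((2 : ℝ) / 3) with hcgdef
    have hcg_nonneg : 0 ≤ cg := by positivity
    have hsum : ENNReal.ofReal (L2 ^ 2) * ENNReal.ofReal (4 * Real.pi * R) +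
        ENNReal.ofReal L1 ^ 2 * ENNReal.ofReal (R ^ 2)⁻¹
        = ENNReal.ofReal (L2 ^ 2 * (4 * Real.pi * R) + L1 ^ 2 * (R ^ 2)⁻¹) := by
      rw [← ENNReal.ofReal_mul (by positivity), ← ENNReal.ofReal_pow hL1pos.le,
        ← ENNReal.ofReal_mul (by positivity),
        ← ENNReal.ofReal_add (by positivity) (by positivity)]
    have hkey : L2 ^ 2 * (4 * Real.pi * R) + L1 ^ 2 * (R ^ 2)⁻¹ = cg ^ 2 := by
      have h4pi : 4 * Real.pi = 2 * p ^ 3 := by rw [hp3]; ring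
      have hsq3 : Real.sqrt 3 ^ 2 = 3 := Real.sq_sqrt (by norm_num)
      rw [hcgdef, ← hpdef, ← hqdef, h23, ← hq3, ← hs3, hRdef, h4pi,
        show (Real.sqrt 3 * p * q * s ^ 2) ^ 2 = Real.sqrt 3 ^ 2 * (p * q * s ^ 2) ^ 2 by ring,
        hsq3]
      field_simp
      ring
    calc (∫⁻ x, ∫⁻ y, ENNReal.ofReal (|V x| * |V y| / sqDist x y)) ^ ((1 : ℝ) / 2)
        ≤ (ENNReal.ofReal (cg ^ 2)) ^ ((1 : ℝ) / 2) := by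
          apply ENNReal.rpow_le_rpow _ (by norm_num)
          rw [hLHS, ← hkey, ← hsum]
          exact hmb
      _ = ENNReal.ofReal cg := by
          rw [ENNReal.ofReal_rpow_of_nonneg (by positivity) (by norm_num)]
          congr 1
          rw [← Real.rpow_natCast cg 2, ← Real.rpow_mul hcg_nonneg]
          norm_num
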